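/- arXiv:2012.07054 — 3 statements merged into one kernel-verified Lean document; each statement's English description precedes it below -/
import Mathlib

section
/- Let f : ℝⁿ → ℝ be convex, differentiable, and μ-smooth with μ > 0, let A be an n×d real matrix, and λ > 0. Then the primal problem min_x f(Ax) + (λ/2)‖x‖² has a unique minimizer x*, the Fenchel dual problem min_z f*(z) + (1/(2λ))‖Aᵀz‖² has a unique minimizer z*, and these are related by x* = -(1/λ)Aᵀz* and z* = ∇f(Ax*). -/
open scoped RealInnerProductSpace
open Matrix MeasureTheory ProbabilityTheory

noncomputable section

abbrev EuclR (n : ℕ) := EuclideanSpace ℝ (Fin n)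

def matVec {p q : ℕ} (M : Matrix (Fin p) (Fin q) ℝ) (x : EuclR q) : EuclR p :=
  Matrix.toEuclideanLin M x

def matCLM {p q : ℕ} (M : Matrix (Fin p) (Fin q) ℝ) : EuclR q →L[ℝ] EuclR p :=
  LinearMap.toContinuousLinearMap (Matrix.toEuclideanLin M)

def ranM {p q : ℕ} (M : Matrix (Fin p) (Fin q) ℝ) : Submodule ℝ (EuclR p) :=
  LinearMap.range (Matrix.toEuclideanLin M)

def projOn {p : ℕ} (K : Submodule ℝ (EuclR p)) (x : EuclR p) : EuclR p :=
  (K.orthogonalProjectionOnto x : EuclR p)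

def perpCLM {p : ℕ} (K : Submodule ℝ (EuclR p)) : EuclR p →L[ℝ] EuclR p :=
  ContinuousLinearMap.id ℝ (EuclR p) - K.subtypeL.comp (K.orthogonalProjectionOnto)

def fconj {p : ℕ} (f : EuclR p → ℝ) (z : EuclR p) : EReal :=
  ⨆ w : EuclR p, ((⟪w, z⟫ - f w : ℝ) : EReal)

def fdom {p : ℕ} (f : EuclR p → ℝ) : Set (EuclR p) := {z | fconj f z ≠ ⊤}

def tcone {p : ℕ} (f : EuclR p → ℝ) (z : EuclR p) : Set (EuclR p) :=
  {Δ | ∃ t : ℝ, 0 ≤ t ∧ ∃ y ∈ fdom f, Δ = t • (y - z)}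

def ZfVal {n d m : ℕ} (f : EuclR n → ℝ) (zs : EuclR n)
    (A : Matrix (Fin n) (Fin d) ℝ) (S : Matrix (Fin d) (Fin m) ℝ) : ℝ :=
  sSup ((fun Δ => ‖matVec Aᵀ Δ - projOn (ranM S) (matVec Aᵀ Δ)‖) ''
    (tcone f zs ∩ Metric.closedBall 0 1))

/-! The primal objective `P x = f (A x) + λ/2 ‖x‖²` is `λ`-strongly convex and coercive, so it has a
unique minimizer `x*`, at which the first-order condition reads `Aᵀ ∇f(A x*) + λ x* = 0`.
Put `z* = ∇f(A x*)`. Weak duality `-P x ≤ D z` combines the Fenchel–Young inequality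
`f*(z) ≥ ⟪A x, z⟫ - f (A x)` with `⟪x, Aᵀ z⟫ ≥ -λ/2 ‖x‖² - ‖Aᵀ z‖² / (2λ)`; at `(x*, z*)` both are
equalities, the first because `z*` is a gradient of the convex `f` at `A x*`, the second because
`Aᵀ z* = -λ x*`. Conversely, `D z = -P x*` forces the supremum defining `f*(z)` to be attained at
`A x*`, hence `z = ∇f(A x*)`. -/

open Set Filter ContinuousLinearMap

section Gradient

variable {E : Type*} [NormedAddCommGroup E] [InnerProductSpace ℝ E] [CompleteSpace E]
  {f : E → ℝ} {x g : E}

theorem ConvexOn.add_inner_gradient_le (hf : ConvexOn ℝ univ f) (hg : HasGradientAt f g x)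
    (w : E) : f x + ⟪g, w - x⟫ ≤ f w := by
  have hline : ConvexOn ℝ univ (f ∘ AffineMap.lineMap (k := ℝ) x w) := by
    simpa using hf.comp_affineMap (AffineMap.lineMap x w : ℝ →ᵃ[ℝ] E)
  have hderiv : HasDerivAt (f ∘ AffineMap.lineMap (k := ℝ) x w) ⟪g, w - x⟫ 0 := by
    have hfx : HasFDerivAt f (InnerProductSpace.toDual ℝ E g) (AffineMap.lineMap x w (0 : ℝ)) := by
      simpa using hasGradientAt_iff_hasFDerivAt.mp hg
    simpa using hfx.comp_hasDerivAt (0 : ℝ) AffineMap.hasDerivAt_lineMap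
  have hslope := hline.le_slope_of_hasDerivAt (mem_univ 0) (mem_univ 1) one_pos hderiv
  simp only [slope_def_field, Function.comp_apply, AffineMap.lineMap_apply_one,
    AffineMap.lineMap_apply_zero, sub_zero, div_one] at hslope
  linarith

theorem IsLocalMin.hasGradientAt_eq_zero (h : IsLocalMin f x) (hg : HasGradientAt f g x) :
    g = 0 := by
  simpa using h.hasFDerivAt_eq_zero (hasGradientAt_iff_hasFDerivAt.mp hg)

theorem HasGradientAt.eq_of_isMaxOn_inner_sub {z : E} (hg : HasGradientAt f g x)
    (h : IsMaxOn (fun w => ⟪w, z⟫ - f w) univ x) : z = g := by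
  have hmin : IsLocalMin (fun w => f w - ⟪z, w⟫) x :=
    Eventually.of_forall fun w => by
      simpa [real_inner_comm z] using neg_le_neg (isMaxOn_univ_iff.mp h w)
  have hgrad : HasGradientAt (fun w => f w - ⟪z, w⟫) (g - z) x := by
    rw [hasGradientAt_iff_hasFDerivAt, map_sub]
    exact (hasGradientAt_iff_hasFDerivAt.mp hg).sub (innerSL ℝ z).hasFDerivAt
  exact (sub_eq_zero.mp (hmin.hasGradientAt_eq_zero hgrad)).symm

end Gradient

theorem norm_smul_add_sq_div {E : Type*} [NormedAddCommGroup E] [InnerProductSpace ℝ E]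
    {lam : ℝ} (hlam : lam ≠ 0) (x y : E) :
    ‖lam • x + y‖ ^ 2 / (2 * lam) = lam / 2 * ‖x‖ ^ 2 + ⟪x, y⟫ + 1 / (2 * lam) * ‖y‖ ^ 2 := by
  rw [norm_add_sq_real, norm_smul, real_inner_smul_left, Real.norm_eq_abs, mul_pow, sq_abs]
  field_simp

section FenchelConjugate

variable {p : ℕ} {f : EuclR p → ℝ} {x g z : EuclR p}

theorem le_fconj (f : EuclR p → ℝ) (w z : EuclR p) : ((⟪w, z⟫ - f w : ℝ) : EReal) ≤ fconj f z :=
  le_iSup (fun w => ((⟪w, z⟫ - f w : ℝ) : EReal)) w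

theorem fconj_eq_of_hasGradientAt (hf : ConvexOn ℝ univ f) (hg : HasGradientAt f g x) :
    fconj f g = ((⟪x, g⟫ - f x : ℝ) : EReal) := by
  refine le_antisymm (iSup_le fun w => EReal.coe_le_coe_iff.mpr ?_) (le_fconj f x g)
  have := hf.add_inner_gradient_le hg w
  rw [inner_sub_right] at this
  rw [real_inner_comm g w, real_inner_comm g x]
  linarith

theorem HasGradientAt.eq_of_fconj_le (hg : HasGradientAt f g x)
    (h : fconj f z ≤ ((⟪x, z⟫ - f x : ℝ) : EReal)) : z = g :=
  hg.eq_of_isMaxOn_inner_sub fun w _ => EReal.coe_le_coe_iff.mp ((le_fconj f w z).trans h)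

end FenchelConjugate

section Primal

variable {E F : Type*} [NormedAddCommGroup E] [InnerProductSpace ℝ E]
  [NormedAddCommGroup F] [InnerProductSpace ℝ F] {f : F → ℝ} {L : E →L[ℝ] F} {lam : ℝ}

def primalObjective (f : F → ℝ) (L : E →L[ℝ] F) (lam : ℝ) (x : E) : ℝ :=
  f (L x) + lam / 2 * ‖x‖ ^ 2

theorem strongConvexOn_primalObjective (hf : ConvexOn ℝ univ f) :
    StrongConvexOn univ lam (primalObjective f L lam) :=
  strongConvexOn_iff_convex.mpr <| by
    simpa [primalObjective, Function.comp_def] using hf.comp_linearMap L.toLinearMap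

variable [CompleteSpace E] [CompleteSpace F]

theorem hasGradientAt_primalObjective {x : E} {g : F} (hg : HasGradientAt f g (L x)) :
    HasGradientAt (primalObjective f L lam) (L.adjoint g + lam • x) x := by
  rw [hasGradientAt_iff_hasFDerivAt]
  have hquad := (hasStrictFDerivAt_norm_sq x).hasFDerivAt.const_mul (lam / 2)
  refine (((hasGradientAt_iff_hasFDerivAt.mp hg).comp x L.hasFDerivAt).add hquad).congr_fderiv ?_
  ext v
  simp only [_root_.add_apply, ContinuousLinearMap.comp_apply, InnerProductSpace.toDual_apply_apply,
    _root_.smul_apply, coe_innerSL_apply, nsmul_eq_mul, Nat.cast_ofNat, smul_eq_mul, map_add,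
    map_smul, adjoint_inner_left, add_right_inj]
  ring

theorem tendsto_primalObjective_cocompact [ProperSpace E] (hlam : 0 < lam)
    (hf : ConvexOn ℝ univ f) {g : F} (hg : HasGradientAt f g 0) :
    Tendsto (primalObjective f L lam) (cocompact E) atTop := by
  set c := ‖L.adjoint g‖
  have hbound : ∀ x, f 0 + ‖x‖ * (lam / 2 * ‖x‖ - c) ≤ primalObjective f L lam x := by
    intro x
    have hsupport := hf.add_inner_gradient_le hg (L x)
    have hcs : -(c * ‖x‖) ≤ ⟪L.adjoint g, x⟫ :=
      neg_le_of_abs_le (abs_real_inner_le_norm _ _)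
    rw [sub_zero, ← adjoint_inner_left] at hsupport
    simp only [primalObjective]
    nlinarith
  have hquad : Tendsto (fun t : ℝ => f 0 + t * (lam / 2 * t - c)) atTop atTop :=
    tendsto_atTop_add_const_left _ _ (tendsto_id.atTop_mul_atTop₀
      (tendsto_atTop_add_const_right _ _ (tendsto_id.const_mul_atTop (half_pos hlam))))
  exact tendsto_atTop_mono hbound (hquad.comp tendsto_norm_cocompact_atTop)

theorem exists_isMinOn_primalObjective [FiniteDimensional ℝ E] (hlam : 0 < lam)
    (hf : ConvexOn ℝ univ f) (hdiff : Differentiable ℝ f) :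
    ∃ x, IsMinOn (primalObjective f L lam) univ x := by
  have hcont : Continuous (primalObjective f L lam) :=
    (hdiff.continuous.comp L.continuous).add (by fun_prop)
  obtain ⟨x, hx⟩ := hcont.exists_forall_le
    (tendsto_primalObjective_cocompact hlam hf (hdiff 0).hasGradientAt)
  exact ⟨x, fun y _ => hx y⟩

theorem adjoint_apply_eq_neg_smul_of_isMinOn {x : E} {g : F}
    (hx : IsMinOn (primalObjective f L lam) univ x) (hg : HasGradientAt f g (L x)) :
    L.adjoint g = -(lam • x) :=
  eq_neg_of_add_eq_zero_left
    ((hx.isLocalMin univ_mem).hasGradientAt_eq_zero (hasGradientAt_primalObjective hg))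

end Primal

section Dual

variable {E : Type*} [NormedAddCommGroup E] [InnerProductSpace ℝ E] [CompleteSpace E]
  {n : ℕ} {f : EuclR n → ℝ} {L : E →L[ℝ] EuclR n} {lam : ℝ}

def dualObjective (f : EuclR n → ℝ) (L : E →L[ℝ] EuclR n) (lam : ℝ) (z : EuclR n) : EReal :=
  fconj f z + ((1 / (2 * lam) * ‖L.adjoint z‖ ^ 2 : ℝ) : EReal)

theorem neg_primalObjective_le (hlam : 0 < lam) (x : E) (z : EuclR n) :
    -primalObjective f L lam x ≤ ⟪L x, z⟫ - f (L x) + 1 / (2 * lam) * ‖L.adjoint z‖ ^ 2 := by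
  have hsq := norm_smul_add_sq_div hlam.ne' x (L.adjoint z)
  have hnonneg : 0 ≤ ‖lam • x + L.adjoint z‖ ^ 2 / (2 * lam) := by positivity
  rw [adjoint_inner_right] at hsq
  simp only [primalObjective]
  linarith

theorem neg_primalObjective_le_dualObjective (hlam : 0 < lam) (x : E) (z : EuclR n) :
    ((-primalObjective f L lam x : ℝ) : EReal) ≤ dualObjective f L lam z :=
  (EReal.coe_le_coe_iff.mpr (neg_primalObjective_le hlam x z)).trans <| by
    rw [EReal.coe_add, dualObjective]
    gcongr
    exact le_fconj f (L x) z

theorem dualObjective_eq_neg_primalObjective (hlam : 0 < lam) (hf : ConvexOn ℝ univ f) {x : E}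
    {z : EuclR n} (hz : HasGradientAt f z (L x)) (hx : L.adjoint z = -(lam • x)) :
    dualObjective f L lam z = ((-primalObjective f L lam x : ℝ) : EReal) := by
  have hsq := norm_smul_add_sq_div hlam.ne' x (L.adjoint z)
  rw [hx, add_neg_cancel, norm_zero, zero_pow two_ne_zero, zero_div, ← hx,
    adjoint_inner_right] at hsq
  rw [dualObjective, fconj_eq_of_hasGradientAt hf hz, ← EReal.coe_add, EReal.coe_eq_coe_iff,
    primalObjective]
  linarith

theorem HasGradientAt.eq_of_dualObjective_le (hlam : 0 < lam) {x : E} {g z : EuclR n}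
    (hg : HasGradientAt f g (L x))
    (h : dualObjective f L lam z ≤ ((-primalObjective f L lam x : ℝ) : EReal)) : z = g := by
  have hcancel := EReal.addLECancellable_coe (1 / (2 * lam) * ‖L.adjoint z‖ ^ 2)
  refine hg.eq_of_fconj_le (hcancel.add_le_add_iff_right.mp ?_)
  rw [← EReal.coe_add]
  exact h.trans (EReal.coe_le_coe_iff.mpr (neg_primalObjective_le hlam x z))

end Dual

theorem matVec_transpose_eq_adjoint {p q : ℕ} (A : Matrix (Fin p) (Fin q) ℝ) (z : EuclR p) :
    matVec Aᵀ z = (matCLM A).adjoint z := by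
  rw [matCLM, ← LinearMap.adjoint_toContinuousLinearMap,
    ← Matrix.toEuclideanLin_conjTranspose_eq_adjoint, Matrix.conjTranspose_eq_transpose_of_trivial]
  rfl

theorem primal_dual_fenchel_general (n d : ℕ) (f : EuclR n → ℝ) (lam : ℝ)
    (hlam : 0 < lam)
    (hconv : ConvexOn ℝ Set.univ f)
    (hdiff : ∀ x, HasGradientAt f (gradient f x) x)
    (A : Matrix (Fin n) (Fin d) ℝ) :
    ∃ xs : EuclR d, ∃ zs : EuclR n,
      (∀ x, f (matVec A xs) + lam / 2 * ‖xs‖ ^ 2 ≤ f (matVec A x) + lam / 2 * ‖x‖ ^ 2) ∧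
      (∀ x, (∀ x', f (matVec A x) + lam / 2 * ‖x‖ ^ 2 ≤ f (matVec A x') + lam / 2 * ‖x'‖ ^ 2)
          → x = xs) ∧
      (∀ z, fconj f zs + ((1 / (2 * lam) * ‖matVec Aᵀ zs‖ ^ 2 : ℝ) : EReal)
          ≤ fconj f z + ((1 / (2 * lam) * ‖matVec Aᵀ z‖ ^ 2 : ℝ) : EReal)) ∧
      (∀ z, (∀ z', fconj f z + ((1 / (2 * lam) * ‖matVec Aᵀ z‖ ^ 2 : ℝ) : EReal)
          ≤ fconj f z' + ((1 / (2 * lam) * ‖matVec Aᵀ z'‖ ^ 2 : ℝ) : EReal)) → z = zs) ∧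
      xs = (-(1 / lam)) • matVec Aᵀ zs ∧
      zs = gradient f (matVec A xs) := by
  set L := matCLM A
  obtain ⟨xs, hxs⟩ := exists_isMinOn_primalObjective (L := L) hlam hconv
    fun x => (hdiff x).differentiableAt
  set zs := gradient f (L xs)
  have hkkt : L.adjoint zs = -(lam • xs) := adjoint_apply_eq_neg_smul_of_isMinOn hxs (hdiff _)
  have hdual : dualObjective f L lam zs = ((-primalObjective f L lam xs : ℝ) : EReal) :=
    dualObjective_eq_neg_primalObjective hlam hconv (hdiff _) hkkt
  have hstrict := (strongConvexOn_primalObjective (L := L) hconv).strictConvexOn hlam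
  simp only [matVec_transpose_eq_adjoint]
  refine ⟨xs, zs, fun x => hxs (mem_univ x),
    fun x hx => hstrict.eq_of_isMinOn (fun x' _ => hx x') hxs (mem_univ x) (mem_univ xs),
    fun z => hdual.trans_le (neg_primalObjective_le_dualObjective hlam xs z),
    fun z hz => (hdiff _).eq_of_dualObjective_le hlam ((hz zs).trans_eq hdual), ?_, rfl⟩
  rw [hkkt, smul_neg, smul_smul, neg_mul, one_div_mul_cancel hlam.ne', neg_smul, one_smul, neg_neg]

/-- existence/uniqueness of primal and dual solutions and KKT relations. -/
theorem primal_dual_fenchel (n d : ℕ) (f : EuclR n → ℝ) (μ lam : ℝ)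
    (hμ : 0 < μ) (hlam : 0 < lam)
    (hconv : ConvexOn ℝ Set.univ f)
    (hdiff : ∀ x, HasGradientAt f (gradient f x) x)
    (hsmooth : ∀ x y, ‖gradient f y - gradient f x‖ ≤ μ * ‖y - x‖)
    (A : Matrix (Fin n) (Fin d) ℝ) :
    ∃ xs : EuclR d, ∃ zs : EuclR n,
      (∀ x, f (matVec A xs) + lam / 2 * ‖xs‖ ^ 2 ≤ f (matVec A x) + lam / 2 * ‖x‖ ^ 2) ∧
      (∀ x, (∀ x', f (matVec A x) + lam / 2 * ‖x‖ ^ 2 ≤ f (matVec A x') + lam / 2 * ‖x'‖ ^ 2)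
          → x = xs) ∧
      (∀ z, fconj f zs + ((1 / (2 * lam) * ‖matVec Aᵀ zs‖ ^ 2 : ℝ) : EReal)
          ≤ fconj f z + ((1 / (2 * lam) * ‖matVec Aᵀ z‖ ^ 2 : ℝ) : EReal)) ∧
      (∀ z, (∀ z', fconj f z + ((1 / (2 * lam) * ‖matVec Aᵀ z‖ ^ 2 : ℝ) : EReal)
          ≤ fconj f z' + ((1 / (2 * lam) * ‖matVec Aᵀ z'‖ ^ 2 : ℝ) : EReal)) → z = zs) ∧
      xs = (-(1 / lam)) • matVec Aᵀ zs ∧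
      zs = gradient f (matVec A xs) :=
  primal_dual_fenchel_general n d f lam hlam hconv hdiff A
end
end

section
/- Let x, y ∈ ℝⁿ and β > 0 satisfy β·⟨x, y⟩ > ‖y‖². Then there exists a symmetric matrix H with 0 ≺ H ⪯ β·I and y = Hx. -/
/-!
Take `u = β x - y` and `H = β I - t u uᵀ` with `t = 1 / ⟨x, u⟩`. Then `H x = β x - u = y` and
`β I - H = t u uᵀ ⪰ 0`. The hypothesis `‖y‖² < β ⟨x, y⟩` is equivalent to `‖u‖² < β ⟨x, u⟩`
(the two differences are equal), which forces `⟨x, u⟩ > 0` and `t ‖u‖² < β`; by Cauchy–Schwarz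
the latter makes `wᵀ H w ≥ (β - t ‖u‖²) ‖w‖²` positive.
-/

open scoped RealInnerProductSpace
open Matrix MeasureTheory ProbabilityTheory

noncomputable section

theorem norm_smul_sub_sq_sub_inner {E : Type*} [NormedAddCommGroup E] [InnerProductSpace ℝ E]
    (β : ℝ) (x y : E) :
    ‖β • x - y‖ ^ 2 - β * ⟪x, β • x - y⟫ = ‖y‖ ^ 2 - β * ⟪x, y⟫ := by
  rw [norm_sub_sq_real, norm_smul, inner_sub_right, real_inner_smul_right, real_inner_smul_left,
    real_inner_self_eq_norm_sq, Real.norm_eq_abs, mul_pow, sq_abs]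
  ring

namespace Matrix

variable {n : Type*} [Fintype n]

theorem posSemidef_smul_vecMulVec_self {t : ℝ} (ht : 0 ≤ t) (v : n → ℝ) :
    (t • vecMulVec v v).PosSemidef :=
  (posSemidef_vecMulVec_self_star v).smul ht

variable [DecidableEq n]

theorem smul_one_sub_smul_vecMulVec_mulVec (β t : ℝ) (v w : n → ℝ) :
    (β • (1 : Matrix n n ℝ) - t • vecMulVec v v) *ᵥ w = β • w - (t * (v ⬝ᵥ w)) • v := by
  rw [sub_mulVec, smul_mulVec, one_mulVec, smul_mulVec, vecMulVec_mulVec]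
  simp [mul_smul]

theorem dotProduct_smul_one_sub_smul_vecMulVec_mulVec (β t : ℝ) (v w : n → ℝ) :
    w ⬝ᵥ ((β • (1 : Matrix n n ℝ) - t • vecMulVec v v) *ᵥ w) =
      β * (w ⬝ᵥ w) - t * (v ⬝ᵥ w) ^ 2 := by
  rw [smul_one_sub_smul_vecMulVec_mulVec, dotProduct_sub, dotProduct_smul, dotProduct_smul,
    dotProduct_comm w v]
  simp only [smul_eq_mul]
  ring

theorem posDef_smul_one_sub_smul_vecMulVec {β t : ℝ} {v : n → ℝ} (ht : 0 ≤ t)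
    (hv : t * (v ⬝ᵥ v) < β) : (β • (1 : Matrix n n ℝ) - t • vecMulVec v v).PosDef := by
  refine PosDef.of_dotProduct_mulVec_pos ?_ fun w hw => ?_
  · exact (isHermitian_one.smul (IsSelfAdjoint.all β)).sub
      (posSemidef_smul_vecMulVec_self ht v).isHermitian
  have hww : 0 < w ⬝ᵥ w := by simpa using dotProduct_self_star_pos_iff.2 hw
  have cauchy_schwarz : (v ⬝ᵥ w) ^ 2 ≤ (v ⬝ᵥ v) * (w ⬝ᵥ w) := by
    simpa [dotProduct, sq] using Finset.sum_mul_sq_le_sq_mul_sq Finset.univ v w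
  rw [star_trivial, dotProduct_smul_one_sub_smul_vecMulVec_mulVec]
  nlinarith [mul_le_mul_of_nonneg_left cauchy_schwarz ht]

end Matrix

/-- existence of a symmetric matrix 0 ≺ H ⪯ βI mapping x to y. -/
theorem exists_symmetric_map (p : ℕ) (x y : EuclR p) (β : ℝ) (hβ : 0 < β)
    (h : ‖y‖ ^ 2 < β * ⟪x, y⟫) :
    ∃ H : Matrix (Fin p) (Fin p) ℝ,
      H.IsSymm ∧ H.PosDef ∧ (β • (1 : Matrix (Fin p) (Fin p) ℝ) - H).PosSemidef ∧
      matVec H x = y := by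
  set u := β • x - y
  have hu : ‖u‖ ^ 2 < β * ⟪x, u⟫ := by linarith [norm_smul_sub_sq_sub_inner β x y]
  have hxu : 0 < ⟪x, u⟫ := pos_of_mul_pos_right ((sq_nonneg _).trans_lt hu) hβ.le
  have huu : u.ofLp ⬝ᵥ u.ofLp = ‖u‖ ^ 2 := by
    rw [← real_inner_self_eq_norm_sq, EuclideanSpace.inner_eq_star_dotProduct, star_trivial]
  have hux : u.ofLp ⬝ᵥ x.ofLp = ⟪x, u⟫ := by
    rw [EuclideanSpace.inner_eq_star_dotProduct, star_trivial, dotProduct_comm]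
  set t := ⟪x, u⟫⁻¹
  have ht : 0 ≤ t := inv_nonneg.2 hxu.le
  have hH := posDef_smul_one_sub_smul_vecMulVec (β := β) (v := u.ofLp) ht
    (by rw [huu, ← div_eq_inv_mul, div_lt_iff₀ hxu]; linarith)
  refine ⟨_, isHermitian_iff_isSymm.1 hH.isHermitian, hH, ?_, ?_⟩
  · rw [sub_sub_cancel]
    exact posSemidef_smul_vecMulVec_self ht _
  · change WithLp.toLp 2 (_ *ᵥ x.ofLp) = y
    rw [smul_one_sub_smul_vecMulVec_mulVec, hux, inv_mul_cancel₀ hxu.ne', one_smul]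
    simp [u]
end
end

section
/- Let g : ℝⁿ → ℝ be convex such that for two points y*, z* there exist subgradients g_y ∈ ∂g(y*) and g_z ∈ ∂g(z*) with ‖g_y - g_z‖² ≤ (1/γ)·⟨g_y - g_z, y* - z*⟩ and (1/μ)·‖y* - z*‖² ≤ ⟨g_y - g_z, y* - z*⟩ for constants γ, μ > 0. Then there exists a symmetric matrix H with 0 ≺ H ⪯ (2/γ)·I such that g_y - g_z = H(y* - z*). -/
/-!
Write `x = y* - z*`, `y = g_y - g_z`, `c = ⟨x, y⟩` and `δ = β - ‖y‖² / c`. The matrix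
`H = y yᵀ / c + δ (I - x xᵀ / ‖x‖²)` sends `x` to `y`, and its quadratic form is
`⟨y, v⟩² / c + δ ‖v - proj_x v‖²`. When `‖y‖² < β c` both `c` and `δ` are positive, and the form
is positive definite because the second term vanishes only on multiples of `x`, where the first
does not. Moreover `β ‖v‖²` exceeds it by `(‖y‖² ‖v‖² - ⟨y, v⟩²) / c + δ ⟨x, v⟩² / ‖x‖²`, which
is nonnegative by Cauchy–Schwarz, so `H ⪯ β I`. Cocoercivity with strong monotonicity gives
`‖y‖² ≤ c / γ < 2 c / γ`, so `β = 2 / γ` works; if `x = 0` then `y = 0` and `H = (2 / γ) I`.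
-/

open scoped RealInnerProductSpace
open Matrix MeasureTheory ProbabilityTheory

noncomputable section

def subgradAt {p : ℕ} (g : EuclR p → ℝ) (x v : EuclR p) : Prop :=
  ∀ z, g x + ⟪v, z - x⟫ ≤ g z

section DotProduct
variable {ι R : Type*} [Fintype ι]

lemma dotProduct_self_nonneg [Ring R] [LinearOrder R] [IsStrictOrderedRing R] (v : ι → R) :
    0 ≤ v ⬝ᵥ v :=
  Finset.sum_nonneg fun i _ => mul_self_nonneg (v i)

lemma dotProduct_self_pos [Ring R] [LinearOrder R] [IsStrictOrderedRing R] {v : ι → R}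
    (hv : v ≠ 0) : 0 < v ⬝ᵥ v :=
  (dotProduct_self_nonneg v).lt_of_ne' (dotProduct_self_eq_zero.not.2 hv)

lemma dotProduct_sq_le_dotProduct_self_mul [CommRing R] [LinearOrder R] [IsStrictOrderedRing R]
    (u v : ι → R) : (u ⬝ᵥ v) ^ 2 ≤ (u ⬝ᵥ u) * (v ⬝ᵥ v) := by
  simpa [dotProduct, sq] using Finset.sum_mul_sq_le_sq_mul_sq Finset.univ u v

lemma dotProduct_vecMulVec_self_mulVec [CommRing R] (y v : ι → R) :
    v ⬝ᵥ (vecMulVec y y *ᵥ v) = (y ⬝ᵥ v) ^ 2 := by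
  rw [vecMulVec_mulVec, op_smul_eq_smul, dotProduct_smul, smul_eq_mul, dotProduct_comm v y, sq]

lemma dotProduct_self_sub_sq_div [Field R] (x v : ι → R) :
    v ⬝ᵥ v - (x ⬝ᵥ v) ^ 2 / (x ⬝ᵥ x) =
      (v - ((x ⬝ᵥ v) / (x ⬝ᵥ x)) • x) ⬝ᵥ (v - ((x ⬝ᵥ v) / (x ⬝ᵥ x)) • x) := by
  rcases eq_or_ne (x ⬝ᵥ x) 0 with hx | hx
  · simp [hx]
  simp only [sub_dotProduct, dotProduct_sub, smul_dotProduct, dotProduct_smul, smul_eq_mul,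
    dotProduct_comm v x]
  field_simp
  ring

lemma dotProduct_pos_of_dotProduct_self_lt [CommRing R] [LinearOrder R] [IsStrictOrderedRing R]
    {β : R} {x y : ι → R} (hβ : 0 < β) (h : y ⬝ᵥ y < β * (x ⬝ᵥ y)) : 0 < x ⬝ᵥ y :=
  pos_of_mul_pos_right ((dotProduct_self_nonneg y).trans_lt h) hβ.le

lemma sub_div_pos_of_dotProduct_self_lt [Field R] [LinearOrder R] [IsStrictOrderedRing R]
    {β : R} {x y : ι → R} (hβ : 0 < β) (h : y ⬝ᵥ y < β * (x ⬝ᵥ y)) :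
    0 < β - (y ⬝ᵥ y) / (x ⬝ᵥ y) := by
  rwa [sub_pos, div_lt_iff₀ (dotProduct_pos_of_dotProduct_self_lt hβ h)]

end DotProduct

section SecantMatrix
variable {ι : Type*} [Fintype ι] [DecidableEq ι]

def secantMatrix (β : ℝ) (x y : ι → ℝ) : Matrix ι ι ℝ :=
  (x ⬝ᵥ y)⁻¹ • vecMulVec y y +
    (β - (y ⬝ᵥ y) / (x ⬝ᵥ y)) • (1 - (x ⬝ᵥ x)⁻¹ • vecMulVec x x)

variable {β : ℝ} {x y : ι → ℝ}

lemma secantMatrix_mulVec_self (hxy : x ⬝ᵥ y ≠ 0) : secantMatrix β x y *ᵥ x = y := by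
  have hx : x ⬝ᵥ x ≠ 0 := by
    rw [Ne, dotProduct_self_eq_zero]; rintro rfl; simp at hxy
  simp only [secantMatrix, add_mulVec, sub_mulVec, smul_mulVec, one_mulVec, vecMulVec_mulVec,
    op_smul_eq_smul, smul_smul, inv_mul_cancel₀ hx, dotProduct_comm y x, inv_mul_cancel₀ hxy]
  simp

lemma isSymm_secantMatrix : (secantMatrix β x y).IsSymm := by
  simp [secantMatrix, IsSymm, transpose_vecMulVec]

lemma dotProduct_secantMatrix_mulVec (v : ι → ℝ) :
    v ⬝ᵥ (secantMatrix β x y *ᵥ v) = (y ⬝ᵥ v) ^ 2 / (x ⬝ᵥ y) +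
      (β - (y ⬝ᵥ y) / (x ⬝ᵥ y)) * (v ⬝ᵥ v - (x ⬝ᵥ v) ^ 2 / (x ⬝ᵥ x)) := by
  simp only [secantMatrix, add_mulVec, sub_mulVec, smul_mulVec, one_mulVec, dotProduct_add,
    dotProduct_sub, dotProduct_smul, dotProduct_vecMulVec_self_mulVec, smul_eq_mul]
  ring

theorem posDef_secantMatrix (hβ : 0 < β) (h : y ⬝ᵥ y < β * (x ⬝ᵥ y)) :
    (secantMatrix β x y).PosDef := by
  have hxy := dotProduct_pos_of_dotProduct_self_lt hβ h
  refine posDef_iff_dotProduct_mulVec.2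
    ⟨isHermitian_iff_isSymm.2 isSymm_secantMatrix, fun v hv => ?_⟩
  rw [star_trivial, dotProduct_secantMatrix_mulVec, dotProduct_self_sub_sq_div]
  set w := v - ((x ⬝ᵥ v) / (x ⬝ᵥ x)) • x
  rcases eq_or_ne w 0 with hw | hw
  · have hyv : y ⬝ᵥ v ≠ 0 := by
      rw [sub_eq_zero.1 hw, dotProduct_smul, smul_eq_mul, dotProduct_comm y x]
      refine mul_ne_zero (fun ht => hv ?_) hxy.ne'
      rw [sub_eq_zero.1 hw, ht, zero_smul]
    rw [hw, zero_dotProduct, mul_zero, add_zero]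
    positivity
  · exact add_pos_of_nonneg_of_pos (by positivity)
      (mul_pos (sub_div_pos_of_dotProduct_self_lt hβ h) (dotProduct_self_pos hw))

theorem posSemidef_smul_one_sub_secantMatrix (hβ : 0 < β) (h : y ⬝ᵥ y < β * (x ⬝ᵥ y)) :
    (β • 1 - secantMatrix β x y).PosSemidef := by
  have hxy := dotProduct_pos_of_dotProduct_self_lt hβ h
  refine posSemidef_iff_dotProduct_mulVec.2
    ⟨isHermitian_iff_isSymm.2 ((isSymm_one.smul β).sub isSymm_secantMatrix), fun v => ?_⟩
  have hCS := dotProduct_sq_le_dotProduct_self_mul y v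
  have hquad : v ⬝ᵥ ((β • 1 - secantMatrix β x y) *ᵥ v) =
      ((y ⬝ᵥ y) * (v ⬝ᵥ v) - (y ⬝ᵥ v) ^ 2) / (x ⬝ᵥ y) +
        (β - (y ⬝ᵥ y) / (x ⬝ᵥ y)) * ((x ⬝ᵥ v) ^ 2 / (x ⬝ᵥ x)) := by
    rw [sub_mulVec, dotProduct_sub, dotProduct_secantMatrix_mulVec, smul_mulVec, one_mulVec,
      dotProduct_smul, smul_eq_mul]
    ring
  rw [star_trivial, hquad]
  exact add_nonneg (div_nonneg (sub_nonneg.2 hCS) hxy.le)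
    (mul_nonneg (sub_div_pos_of_dotProduct_self_lt hβ h).le
      (div_nonneg (sq_nonneg _) (dotProduct_self_nonneg x)))

end SecantMatrix

theorem exists_symmetric_map_of_subgradients_general (p : ℕ) (γ μ : ℝ) (hγ : 0 < γ) (hμ : 0 < μ)
    (ys zs gy gz : EuclR p)
    (h1 : ‖gy - gz‖ ^ 2 ≤ (1 / γ) * ⟪gy - gz, ys - zs⟫)
    (h2 : (1 / μ) * ‖ys - zs‖ ^ 2 ≤ ⟪gy - gz, ys - zs⟫) :
    ∃ H : Matrix (Fin p) (Fin p) ℝ,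
      H.IsSymm ∧ H.PosDef ∧ ((2 / γ) • (1 : Matrix (Fin p) (Fin p) ℝ) - H).PosSemidef ∧
      matVec H (ys - zs) = gy - gz := by
  set x : Fin p → ℝ := (ys - zs).ofLp
  set y : Fin p → ℝ := (gy - gz).ofLp
  have hcoc : y ⬝ᵥ y ≤ 1 / γ * (x ⬝ᵥ y) := by rwa [← real_inner_self_eq_norm_sq] at h1
  have hmono : 1 / μ * (x ⬝ᵥ x) ≤ x ⬝ᵥ y := by rwa [← real_inner_self_eq_norm_sq] at h2
  suffices ∃ H : Matrix (Fin p) (Fin p) ℝ,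
      H.PosDef ∧ ((2 / γ) • (1 : Matrix (Fin p) (Fin p) ℝ) - H).PosSemidef ∧ H *ᵥ x = y by
    obtain ⟨H, hH, hle, hHx⟩ := this
    exact ⟨H, isHermitian_iff_isSymm.1 hH.isHermitian, hH, hle, congrArg (WithLp.toLp 2) hHx⟩
  rcases eq_or_ne x 0 with hx | hx
  · have hy : y = 0 := by
      rw [hx, zero_dotProduct, mul_zero] at hcoc
      exact dotProduct_self_eq_zero.1 (hcoc.antisymm (dotProduct_self_nonneg y))
    exact ⟨(2 / γ) • 1, PosDef.one.smul (by positivity), by rw [sub_self]; exact PosSemidef.zero,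
      by simp [hx, hy]⟩
  · have hxy : 0 < x ⬝ᵥ y := (mul_pos (one_div_pos.2 hμ) (dotProduct_self_pos hx)).trans_le hmono
    have h2γ : (0 : ℝ) < 2 / γ := by positivity
    have h : y ⬝ᵥ y < 2 / γ * (x ⬝ᵥ y) :=
      hcoc.trans_lt (mul_lt_mul_of_pos_right (div_lt_div_of_pos_right one_lt_two hγ) hxy)
    exact ⟨secantMatrix (2 / γ) x y, posDef_secantMatrix h2γ h,
      posSemidef_smul_one_sub_secantMatrix h2γ h, secantMatrix_mulVec_self hxy.ne'⟩

/-- a symmetric matrix 0 ≺ H ⪯ (2/γ)I relating subgradient differences to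
point differences (Lemma A.2). -/
theorem exists_symmetric_map_of_subgradients (p : ℕ) (g : EuclR p → ℝ)
    (hconv : ConvexOn ℝ Set.univ g) (γ μ : ℝ) (hγ : 0 < γ) (hμ : 0 < μ)
    (ys zs gy gz : EuclR p) (hgy : subgradAt g ys gy) (hgz : subgradAt g zs gz)
    (h1 : ‖gy - gz‖ ^ 2 ≤ (1 / γ) * ⟪gy - gz, ys - zs⟫)
    (h2 : (1 / μ) * ‖ys - zs‖ ^ 2 ≤ ⟪gy - gz, ys - zs⟫) :
    ∃ H : Matrix (Fin p) (Fin p) ℝ,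
      H.IsSymm ∧ H.PosDef ∧ ((2 / γ) • (1 : Matrix (Fin p) (Fin p) ℝ) - H).PosSemidef ∧
      matVec H (ys - zs) = gy - gz :=
  exists_symmetric_map_of_subgradients_general p γ μ hγ hμ ys zs gy gz h1 h2
end
end
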